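/- The formal power series T(z,u) in z with polynomial coefficients in u defined by the functional equation T(z,u) = 1 + z^2·u·T(z,u)^2 + z·ΔT(z,u), where ΔT(z,u) = (T(z,u) − T(z,0))/u denotes the discrete derivative, exists and is unique. -/

import Mathlib

open PowerSeries

/-- Discrete derivative in `u`, applied coefficientwise to a power series in `z`
whose coefficients are polynomials in `u`: `ΔF = (F(z,u) - F(z,0))/u`. -/
noncomputable def dDeriv (T : PowerSeries (Polynomial ℚ)) : PowerSeries (Polynomial ℚ) :=
  PowerSeries.mk fun n => ((PowerSeries.coeff (R := Polynomial ℚ) n) T).divX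

noncomputable def sol : ℕ → Polynomial ℚ
  | 0 => 1
  | 1 => (sol 0).divX
  | (n+2) => Polynomial.X * ∑ p ∈ (Finset.HasAntidiagonal.antidiagonal n).attach, sol p.1.1 * sol p.1.2
      + (sol (n+1)).divX
  decreasing_by
  · simp
  · have := Finset.HasAntidiagonal.antidiagonal.fst_le p.2; omega
  · have := Finset.HasAntidiagonal.antidiagonal.snd_le p.2; omega
  · omega

private lemma hX2 (T : PowerSeries (Polynomial ℚ)) :
    (PowerSeries.X : PowerSeries (Polynomial ℚ)) ^ 2
      * PowerSeries.C (R := Polynomial ℚ) Polynomial.X * T ^ 2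
      = PowerSeries.X * (PowerSeries.X * (PowerSeries.C (R := Polynomial ℚ) Polynomial.X * T ^ 2)) := by
  ring

lemma coeff_rhs_zero (T : PowerSeries (Polynomial ℚ)) :
    (PowerSeries.coeff (R := Polynomial ℚ) 0)
      (1 + PowerSeries.X ^ 2 * PowerSeries.C (R := Polynomial ℚ) Polynomial.X * T ^ 2
        + PowerSeries.X * dDeriv T) = 1 := by
  simp [hX2, PowerSeries.coeff_zero_X_mul]

lemma coeff_rhs_one (T : PowerSeries (Polynomial ℚ)) :
    (PowerSeries.coeff (R := Polynomial ℚ) 1)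
      (1 + PowerSeries.X ^ 2 * PowerSeries.C (R := Polynomial ℚ) Polynomial.X * T ^ 2
        + PowerSeries.X * dDeriv T) = ((PowerSeries.coeff (R := Polynomial ℚ) 0) T).divX := by
  simp [hX2, PowerSeries.coeff_succ_X_mul, PowerSeries.coeff_zero_X_mul, dDeriv]

lemma coeff_rhs_two (T : PowerSeries (Polynomial ℚ)) (m : ℕ) :
    (PowerSeries.coeff (R := Polynomial ℚ) (m + 2))
      (1 + PowerSeries.X ^ 2 * PowerSeries.C (R := Polynomial ℚ) Polynomial.X * T ^ 2
        + PowerSeries.X * dDeriv T)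
    = Polynomial.X * ∑ p ∈ Finset.HasAntidiagonal.antidiagonal m,
          (PowerSeries.coeff (R := Polynomial ℚ) p.1) T * (PowerSeries.coeff (R := Polynomial ℚ) p.2) T
        + ((PowerSeries.coeff (R := Polynomial ℚ) (m+1)) T).divX := by
  rw [map_add, map_add, hX2]
  rw [show m + 2 = (m+1) + 1 from rfl, PowerSeries.coeff_succ_X_mul,
    PowerSeries.coeff_succ_X_mul, PowerSeries.coeff_succ_X_mul, PowerSeries.coeff_C_mul]
  simp [dDeriv, sq, PowerSeries.coeff_mul, Finset.mul_sum]


/-- The discrete differential equation `T(z,u) = 1 + z²·u·T² + z·ΔT` has a unique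
solution as a formal power series in `z` with polynomial coefficients in `u`. -/
theorem exists_unique_solution_first_order_DDE :
    ∃! T : PowerSeries (Polynomial ℚ),
      T = 1 + PowerSeries.X ^ 2 * PowerSeries.C (R := Polynomial ℚ) Polynomial.X * T ^ 2
            + PowerSeries.X * dDeriv T := by
  refine ⟨PowerSeries.mk sol, ?_, ?_⟩
  · refine PowerSeries.ext fun n => ?_
    match n with
    | 0 => rw [coeff_rhs_zero]; simp [sol]
    | 1 => rw [coeff_rhs_one]; simp [sol]
    | (m+2) =>
      rw [coeff_rhs_two]
      simp only [PowerSeries.coeff_mk]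
      rw [sol]
      rw [Finset.sum_attach (Finset.HasAntidiagonal.antidiagonal m) (fun p => sol p.1 * sol p.2)]
  · intro T hT
    refine PowerSeries.ext fun n => ?_
    induction n using Nat.strong_induction_on with
    | _ n ih =>
      rw [PowerSeries.coeff_mk]
      conv_lhs => rw [hT]
      match n with
      | 0 => rw [coeff_rhs_zero]; simp [sol]
      | 1 => rw [coeff_rhs_one, ih 0 (by omega), PowerSeries.coeff_mk]; simp [sol]
      | (m+2) =>
        rw [coeff_rhs_two, sol]
        rw [Finset.sum_attach (Finset.HasAntidiagonal.antidiagonal m) (fun p => sol p.1 * sol p.2)]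
        rw [ih (m+1) (by omega), PowerSeries.coeff_mk]
        congr 2
        refine Finset.sum_congr rfl fun p hp => ?_
        have h1 := Finset.HasAntidiagonal.antidiagonal.fst_le hp
        have h2 := Finset.HasAntidiagonal.antidiagonal.snd_le hp
        rw [ih p.1 (by omega), ih p.2 (by omega), PowerSeries.coeff_mk, PowerSeries.coeff_mk]
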